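/- A nonempty pure 1-dimensional simplicial complex K satisfies the removal-collapsibility (RC) condition if and only if K is connected. -/

import Mathlib

/-! Common definitions: finite abstract simplicial complexes, links, stars,
barycentric subdivision, joins, collapsibility, shellability, vertex
decomposability, star decomposability (also "in vertices"), and simplicial
homology (reduced, over ℤ and ℤ₂). -/

namespace Paper

open Finset

variable {V : Type*} [DecidableEq V]

/-- `K` is a (finite, abstract) simplicial complex: downward closed family of finsets. -/
def IsCplx (K : Finset (Finset V)) : Prop :=
  ∀ σ ∈ K, ∀ τ ⊆ σ, τ ∈ K

/-- Vertex set of a complex. -/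
def verts (K : Finset (Finset V)) : Finset V := K.sup id

/-- Dimension of a complex (as an integer; `-1` for `∅` and `{∅}`). -/
def dim (K : Finset (Finset V)) : ℤ := ((K.sup Finset.card : ℕ) : ℤ) - 1

/-- The facets (inclusion-maximal faces) of `K`. -/
def facets (K : Finset (Finset V)) : Finset (Finset V) :=
  K.filter fun σ => ∀ τ ∈ K, σ ⊆ τ → σ = τ

/-- `K` is pure `d`-dimensional: it is nonempty, every face has dimension at most `d`
and every face is contained in a face of dimension exactly `d`. -/
def PureDim (K : Finset (Finset V)) (d : ℤ) : Prop :=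
  K.Nonempty ∧ (∀ σ ∈ K, (σ.card : ℤ) ≤ d + 1) ∧
    ∀ σ ∈ K, ∃ τ ∈ K, σ ⊆ τ ∧ (τ.card : ℤ) = d + 1

/-- Link of a face. -/
def lk (σ : Finset V) (K : Finset (Finset V)) : Finset (Finset V) :=
  (K.filter fun τ => σ ⊆ τ).image fun τ => τ \ σ

/-- Closed star of a face. -/
def star (σ : Finset V) (K : Finset (Finset V)) : Finset (Finset V) :=
  K.filter fun τ => τ ∪ σ ∈ K

/-- Union of the closed stars of a set of vertices. -/
def starSet (S : Finset V) (K : Finset (Finset V)) : Finset (Finset V) :=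
  K.filter fun τ => ∃ v ∈ S, τ ∪ {v} ∈ K

/-- Subcomplex induced on a vertex set `S`. -/
def induced (S : Finset V) (K : Finset (Finset V)) : Finset (Finset V) :=
  K.filter fun σ => σ ⊆ S

/-- Deletion of a vertex:  `K - v`. -/
def deleteV (v : V) (K : Finset (Finset V)) : Finset (Finset V) :=
  K.filter fun σ => v ∉ σ

/-- The full simplex on vertex set `σ`. -/
def simplexCplx (σ : Finset V) : Finset (Finset V) := σ.powerset

/-- The boundary `∂σ` of the simplex on `σ`: all proper subsets of `σ`. -/
def bdSimplex (σ : Finset V) : Finset (Finset V) := σ.powerset.erase σ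

/-- Barycentric subdivision: vertices are the nonempty faces of `K`, faces are
chains of nonempty faces of `K`. -/
def sd (K : Finset (Finset V)) : Finset (Finset (Finset V)) :=
  if K = ∅ then ∅ else
    K.powerset.filter fun c => (∅ ∉ c) ∧ ∀ σ ∈ c, ∀ τ ∈ c, σ ⊆ τ ∨ τ ⊆ σ

/-- Join of two simplicial complexes (on the disjoint union of vertex types). -/
def join {α β : Type*} [DecidableEq α] [DecidableEq β]
    (X : Finset (Finset α)) (Y : Finset (Finset β)) : Finset (Finset (α ⊕ β)) :=
  (X ×ˢ Y).image fun p => p.1.image Sum.inl ∪ p.2.image Sum.inr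

/-- `K'` arises from `K` by an elementary collapse: remove a free face `σ`
together with the unique face `τ` properly containing it. -/
def ElemCollapse (K K' : Finset (Finset V)) : Prop :=
  ∃ σ ∈ K, ∃ τ ∈ K, σ ⊂ τ ∧ (∀ ρ ∈ K, σ ⊂ ρ → ρ = τ) ∧ K' = (K.erase σ).erase τ

/-- `K` collapses to `K'`. -/
def CollapsesTo (K K' : Finset (Finset V)) : Prop :=
  Relation.ReflTransGen ElemCollapse K K'

/-- `K` is collapsible: it collapses to a single vertex. -/
def Collapsible (K : Finset (Finset V)) : Prop :=
  ∃ w : V, CollapsesTo K ({∅, {w}} : Finset (Finset V))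

/-- The removal-collapsibility condition: `K` is empty, or becomes collapsible
after removal of a set of facets. -/
def RC (K : Finset (Finset V)) : Prop :=
  K = ∅ ∨ ∃ F ⊆ facets K, Collapsible (K \ F)

/-- The hereditary removal-collapsibility condition: the link of every face
(including the empty face, whose link is `K` itself) satisfies (RC). -/
def HRC (K : Finset (Finset V)) : Prop :=
  ∀ σ ∈ K, RC (lk σ K)

/-- `K` is shellable: there is a total order of its facets such that each facet
meets the union of the previous ones in a pure complex of codimension one. -/
def Shellable (K : Finset (Finset V)) : Prop :=
  ∃ L : List (Finset V), L.Nodup ∧ L.toFinset = facets K ∧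
    ∀ i : ℕ, (hi : i < L.length) → 1 ≤ i →
      PureDim ((L.get ⟨i, hi⟩).powerset ∩ ((L.take i).map Finset.powerset).foldr (· ∪ ·) ∅)
        (((L.get ⟨i, hi⟩).card : ℤ) - 2)

/-- Vertex decomposability (Provan–Billera) of a pure complex. -/
inductive VD : Finset (Finset V) → Prop
  | simplex (σ : Finset V) : VD σ.powerset
  | shed (K : Finset (Finset V)) (v : V) (hv : {v} ∈ K)
      (hdel : PureDim (deleteV v K) (dim K)) (hVDdel : VD (deleteV v K))
      (hlk : PureDim (lk {v} K) (dim K - 1)) (hVDlk : VD (lk {v} K)) : VD K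

/-- `L` is a shedding order of `K` (a total order on `V(K)`, given as a
duplicate-free list, witnessing vertex decomposability; once a simplex is
reached, an arbitrary order of its vertices qualifies). -/
inductive SheddingOrder : List V → Finset (Finset V) → Prop
  | simplex (σ : Finset V) (L : List V) (hnd : L.Nodup) (hfin : L.toFinset = σ) :
      SheddingOrder L σ.powerset
  | cons (v : V) (L : List V) (K : Finset (Finset V)) (hv : {v} ∈ K) (hvL : v ∉ L)
      (hcov : insert v L.toFinset = verts K)
      (hdel : PureDim (deleteV v K) (dim K))
      (hrest : SheddingOrder L (deleteV v K))
      (hlk : PureDim (lk {v} K) (dim K - 1)) (hVDlk : VD (lk {v} K)) :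
      SheddingOrder (v :: L) K

/-- `W` induces a star partition of `X`: the stars of the vertices of `W`
cover `X` and no two distinct vertices of `W` lie in a common face. -/
def StarPartition (W : Finset V) (X : Finset (Finset V)) : Prop :=
  (∀ σ ∈ X, ∃ w ∈ W, σ ∪ {w} ∈ X) ∧
    ∀ w₁ ∈ W, ∀ w₂ ∈ W, w₁ ≠ w₂ → ¬∃ σ ∈ X, w₁ ∈ σ ∧ w₂ ∈ σ

/-- The overlap `O_X(x, W') = lk(x,X) ∩ st(W',X)`. -/
def overlap (X : Finset (Finset V)) (x : V) (W' : Finset V) : Finset (Finset V) :=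
  lk {x} X ∩ starSet W' X

/-- Star decomposability of the pair `(X, X₀)`.  The total order on the set `W`
inducing the star partition is encoded as a duplicate-free list `L` (earlier in
the list = smaller in the order). -/
inductive StarDec : Finset (Finset V) → Finset V → Prop
  | base : StarDec ({∅} : Finset (Finset V)) (∅ : Finset V)
  | step (X : Finset (Finset V)) (X₀ : Finset V) (k : ℤ) (hk : 0 ≤ k) (hpure : PureDim X k)
      (L : List V) (hne : L ≠ []) (hnd : L.Nodup) (hsub : L.toFinset ⊆ verts X)
      (hsp : StarPartition L.toFinset X)
      (horder : ∃ i < L.length, X₀ = (L.drop i).toFinset)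
      (U : ℕ → Finset V)
      (hUne : ∀ i, i + 1 < L.length → (U i).Nonempty)
      (hUsub : ∀ i, (hi : i + 1 < L.length) →
        U i ⊆ verts (lk {L.get ⟨i, Nat.lt_of_succ_lt hi⟩} X))
      (hUst : ∀ i, (hi : i + 1 < L.length) →
        starSet (U i) (lk {L.get ⟨i, Nat.lt_of_succ_lt hi⟩} X) =
          overlap X (L.get ⟨i, Nat.lt_of_succ_lt hi⟩) ((L.drop (i + 1)).toFinset))
      (hlink : ∀ i, (hi : i + 1 < L.length) →
        StarDec (lk {L.get ⟨i, Nat.lt_of_succ_lt hi⟩} X) (U i))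
      (Ulast : Finset V)
      (hlast : StarDec (lk {L.getLast hne} X) Ulast) :
      StarDec X X₀

/-- The order encoded by the list `L` induces a star decomposition of `(X, X₀)`. -/
def InducesStarDecomp (L : List V) (X : Finset (Finset V)) (X₀ : Finset V) : Prop :=
  (L = [] ∧ X = ({∅} : Finset (Finset V)) ∧ X₀ = ∅) ∨
  ∃ hne : L ≠ [], L.Nodup ∧ StarPartition L.toFinset X ∧
    (∃ i < L.length, X₀ = (L.drop i).toFinset) ∧
    (∀ i, (hi : i + 1 < L.length) →
      ∃ U : Finset V, U.Nonempty ∧ U ⊆ verts (lk {L.get ⟨i, Nat.lt_of_succ_lt hi⟩} X) ∧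
        starSet U (lk {L.get ⟨i, Nat.lt_of_succ_lt hi⟩} X) =
          overlap X (L.get ⟨i, Nat.lt_of_succ_lt hi⟩) ((L.drop (i + 1)).toFinset) ∧
        StarDec (lk {L.get ⟨i, Nat.lt_of_succ_lt hi⟩} X) U) ∧
    (∃ U : Finset V, StarDec (lk {L.getLast hne} X) U)

/-- Star decomposability *in vertices* of the pair `(sd Y, Y₀)`; the data is the
underlying complex `Y` together with `Y₀ ⊆ V(Y)`.  The total order on `V(Y)` is
encoded as a duplicate-free list `L`. -/
inductive StarDecV : Finset (Finset V) → Finset V → Prop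
  | base : StarDecV ({∅} : Finset (Finset V)) (∅ : Finset V)
  | step (Y : Finset (Finset V)) (Y₀ : Finset V) (k : ℤ) (hk : 0 ≤ k) (hpure : PureDim Y k)
      (L : List V) (hne : L ≠ []) (hnd : L.Nodup) (hV : L.toFinset = verts Y)
      (horder : ∃ i < L.length, Y₀ = (L.drop i).toFinset)
      (hlink : ∀ i, (hi : i + 1 < L.length) →
        StarDecV (lk {L.get ⟨i, Nat.lt_of_succ_lt hi⟩} Y)
          (verts (lk {L.get ⟨i, Nat.lt_of_succ_lt hi⟩} Y) ∩ (L.drop (i + 1)).toFinset))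
      (hlast : StarDecV (lk {L.getLast hne} Y) (verts (lk {L.getLast hne} Y))) :
      StarDecV Y Y₀

/-- The order encoded by the list `L` induces a star decomposition of
`(sd Y, Y₀)` in vertices. -/
def InducesStarDecompV (L : List V) (Y : Finset (Finset V)) (Y₀ : Finset V) : Prop :=
  (L = [] ∧ Y = ({∅} : Finset (Finset V)) ∧ Y₀ = ∅) ∨
  ∃ hne : L ≠ [], L.Nodup ∧ L.toFinset = verts Y ∧
    (∃ i < L.length, Y₀ = (L.drop i).toFinset) ∧
    (∀ i, (hi : i + 1 < L.length) →
      StarDecV (lk {L.get ⟨i, Nat.lt_of_succ_lt hi⟩} Y)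
        (verts (lk {L.get ⟨i, Nat.lt_of_succ_lt hi⟩} Y) ∩ (L.drop (i + 1)).toFinset)) ∧
    StarDecV (lk {L.getLast hne} Y) (verts (lk {L.getLast hne} Y))

/-- Simplicial isomorphism between two complexes. -/
def SimpIso {α β : Type*} [DecidableEq α] [DecidableEq β]
    (K : Finset (Finset α)) (L : Finset (Finset β)) : Prop :=
  ∃ f : α → β, Set.InjOn f ↑(verts K) ∧ K.image (fun σ => σ.image f) = L

/-- Simplicial isomorphism of pairs (complex, subcomplex). -/
def SimpIsoPair {α β : Type*} [DecidableEq α] [DecidableEq β]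
    (K K₁ : Finset (Finset α)) (L L₁ : Finset (Finset β)) : Prop :=
  ∃ f : α → β, Set.InjOn f ↑(verts K) ∧ K.image (fun σ => σ.image f) = L ∧
    K₁.image (fun σ => σ.image f) = L₁

/-! Reduced simplicial homology (the empty face is included, so the chain
complex below, graded by cardinality of faces, computes *reduced* homology). -/

/-- Faces of `K` of cardinality `n`. -/
def kfaces (K : Finset (Finset V)) (n : ℕ) : Finset (Finset V) :=
  K.filter fun σ => σ.card = n

/-- The mod 2 boundary operator, from chains on faces of cardinality `n+1`
to chains on faces of cardinality `n`. -/
noncomputable def bdry2 (K : Finset (Finset V)) (n : ℕ) :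
    (↥(kfaces K (n + 1)) → ZMod 2) →ₗ[ZMod 2] (↥(kfaces K n) → ZMod 2) :=
  Matrix.mulVecLin (Matrix.of fun (τ : ↥(kfaces K n)) (σ : ↥(kfaces K (n + 1))) =>
    if (τ : Finset V) ⊆ (σ : Finset V) then (1 : ZMod 2) else 0)

/-- The reduced Betti number `β̃ᵢ(K; ℤ₂)`. -/
noncomputable def betti2 (K : Finset (Finset V)) (i : ℕ) : ℕ :=
  Module.finrank (ZMod 2) (LinearMap.ker (bdry2 K i)) -
    Module.finrank (ZMod 2) (LinearMap.range (bdry2 K (i + 1)))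

/-- Signed incidence coefficient (with respect to an arbitrary, but fixed,
linear order on the vertices; reduced homology does not depend on the choice). -/
noncomputable def coeffInt (σ τ : Finset V) : ℤ :=
  letI : LinearOrder V := IsWellOrder.linearOrder WellOrderingRel
  (σ \ τ).sum fun v => (-1 : ℤ) ^ ((σ.filter fun u => u < v).card)

/-- The integral boundary operator, from chains on faces of cardinality `n+1`
to chains on faces of cardinality `n`. -/
noncomputable def bdryZ (K : Finset (Finset V)) (n : ℕ) :
    (↥(kfaces K (n + 1)) → ℤ) →ₗ[ℤ] (↥(kfaces K n) → ℤ) :=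
  Matrix.mulVecLin (Matrix.of fun (τ : ↥(kfaces K n)) (σ : ↥(kfaces K (n + 1))) =>
    if (τ : Finset V) ⊆ (σ : Finset V) then coeffInt (σ : Finset V) (τ : Finset V) else 0)

/-- `K` has trivial reduced (integral) homology: `H̃ₙ(K; ℤ) = 0` for all
`n ≥ -1`. -/
def TrivialRedHomology (K : Finset (Finset V)) : Prop :=
  K.Nonempty ∧ LinearMap.range (bdryZ K 0) = ⊤ ∧
    ∀ n : ℕ, LinearMap.ker (bdryZ K n) = LinearMap.range (bdryZ K (n + 1))

/-- Reduced Euler characteristic. -/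
def redEuler (K : Finset (Finset V)) : ℤ :=
  (∑ σ ∈ K.filter fun σ => σ ≠ ∅, (-1 : ℤ) ^ (σ.card - 1)) - 1


/-! Removing facets of a pure 1-dimensional complex deletes only edges, and an elementary
collapse that keeps the empty face deletes a pendant edge together with its leaf; neither can
turn a disconnected complex into a connected one, so (RC) forces connectivity. Conversely, a
connected complex contains a spanning tree, grown from a vertex by attaching pendant edges;
undoing the attachments collapses the tree back to that vertex, and every face outside the
tree is an edge, hence a facet. -/

def Joined (K : Finset (Finset V)) : V → V → Prop :=
  Relation.ReflTransGen fun a b => ({a, b} : Finset V) ∈ K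

def Connected (K : Finset (Finset V)) : Prop :=
  ∀ u ∈ verts K, ∀ v ∈ verts K, Joined K u v

theorem _root_.Relation.ReflTransGen.exists_rel_leaving {α : Type*} {r : α → α → Prop}
    {p : α → Prop} {a b : α} (h : Relation.ReflTransGen r a b) (ha : p a) (hb : ¬p b) :
    ∃ c d, r c d ∧ p c ∧ ¬p d := by
  induction h with
  | refl => exact absurd ha hb
  | @tail c d _ hcd ih =>
    by_cases hc : p c
    · exact ⟨c, d, hcd, hc, hb⟩
    · exact ih hc

section Complex

variable {K L T F : Finset (Finset V)} {a b w x : V}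

theorem mem_verts : x ∈ verts K ↔ ∃ σ ∈ K, x ∈ σ := by
  simp [verts, mem_sup]

theorem verts_mono (h : K ⊆ L) : verts K ⊆ verts L :=
  sup_mono h

theorem verts_point : verts ({∅, {w}} : Finset (Finset V)) = {w} := by
  simp [verts]

theorem IsCplx.singleton_mem (hK : IsCplx K) (hx : x ∈ verts K) : {x} ∈ K := by
  obtain ⟨σ, hσ, hxσ⟩ := mem_verts.1 hx
  exact hK σ hσ {x} (singleton_subset_iff.2 hxσ)

theorem IsCplx.empty_mem {α : Type*} {K : Finset (Finset α)} (hK : IsCplx K)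
    (hne : K.Nonempty) : ∅ ∈ K :=
  let ⟨σ, hσ⟩ := hne
  hK σ hσ ∅ (empty_subset σ)

theorem isCplx_point (w : V) : IsCplx ({∅, {w}} : Finset (Finset V)) := by
  intro σ hσ τ hτσ
  rcases mem_insert.1 hσ with rfl | hσ
  · simp [subset_empty.1 hτσ]
  · rcases subset_singleton_iff.1 (mem_singleton.1 hσ ▸ hτσ) with rfl | rfl <;> simp

theorem IsCplx.sdiff_facets (hK : IsCplx K) (hF : F ⊆ facets K) : IsCplx (K \ F) := by
  intro σ hσ τ hτσ
  rw [mem_sdiff] at hσ ⊢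
  refine ⟨hK σ hσ.1 τ hτσ, fun hτF => hσ.2 ?_⟩
  rwa [← (mem_filter.1 (hF hτF)).2 σ hσ.1 hτσ]

theorem IsCplx.insert_pendant (hT : IsCplx T) (ha : {a} ∈ T) :
    IsCplx (insert {a, b} (insert {b} T)) := by
  have hempty : ∅ ∈ T := hT.empty_mem ⟨_, ha⟩
  intro σ hσ τ hτσ
  simp only [mem_insert] at hσ ⊢
  rcases hσ with rfl | rfl | hσ
  · rw [← mem_powerset] at hτσ
    simp only [powerset_insert, mem_union, mem_powerset, subset_singleton_iff, mem_image,
      exists_eq_or_imp, insert_empty_eq, ↓existsAndEq, true_and] at hτσ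
    rcases hτσ with (rfl | rfl) | rfl | rfl <;> simp [hempty, ha]
  · rcases subset_singleton_iff.1 hτσ with rfl | rfl <;> simp [hempty]
  · exact Or.inr (Or.inr (hT σ hσ τ hτσ))

theorem PureDim.card_le_two {α : Type*} {K : Finset (Finset α)} (hK : PureDim K 1) :
    ∀ σ ∈ K, σ.card ≤ 2 := fun σ hσ => by
  have := hK.2.1 σ hσ
  omega

theorem verts_sdiff_facets (hK : IsCplx K) {d : ℤ} (hpure : PureDim K d) (hd : 1 ≤ d)
    (hF : F ⊆ facets K) : verts (K \ F) = verts K := by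
  refine (verts_mono sdiff_subset).antisymm fun x hx => ?_
  have hxK := hK.singleton_mem hx
  have hxF : {x} ∉ F := fun hxF => by
    obtain ⟨τ, hτ, hxτ, hτcard⟩ := hpure.2.2 {x} hxK
    rw [← (mem_filter.1 (hF hxF)).2 τ hτ hxτ, card_singleton] at hτcard
    omega
  exact mem_verts.2 ⟨{x}, mem_sdiff.2 ⟨hxK, hxF⟩, mem_singleton_self x⟩

theorem sdiff_subset_facets (hdim : ∀ σ ∈ K, σ.card ≤ 2) (hT : IsCplx T) (hne : T.Nonempty)
    (hv : verts K ⊆ verts T) : K \ T ⊆ facets K := by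
  intro ρ hρ
  rw [mem_sdiff] at hρ
  have hcard : 2 ≤ ρ.card := by
    by_contra! hlt
    rcases Nat.lt_or_ge ρ.card 1 with h0 | h1
    · exact hρ.2 (card_eq_zero.1 (show ρ.card = 0 by omega) ▸ hT.empty_mem hne)
    · obtain ⟨x, rfl⟩ := card_eq_one.1 (show ρ.card = 1 by omega)
      exact hρ.2 (hT.singleton_mem (hv (mem_verts.2 ⟨_, hρ.1, mem_singleton_self x⟩)))
  exact mem_filter.2 ⟨hρ.1, fun τ hτ hρτ =>
    eq_of_subset_of_card_le hρτ ((hdim τ hτ).trans hcard)⟩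

end Complex

section Collapse

variable {K K' L T : Finset (Finset V)} {a b : V}

theorem ElemCollapse.subset (h : ElemCollapse K K') : K' ⊆ K := by
  obtain ⟨σ, -, τ, -, -, -, rfl⟩ := h
  exact (erase_subset _ _).trans (erase_subset _ _)

theorem CollapsesTo.subset (h : CollapsesTo K L) : L ⊆ K := by
  induction h with
  | refl => exact subset_rfl
  | tail _ hstep ih => exact hstep.subset.trans ih

theorem IsCplx.of_elemCollapse (hK : IsCplx K) (h : ElemCollapse K K') : IsCplx K' := by
  obtain ⟨σ, -, τ, -, hστ, hfree, rfl⟩ := h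
  intro ρ hρ π hπρ
  simp only [mem_erase] at hρ ⊢
  obtain ⟨hρτ, hρσ, hρK⟩ := hρ
  refine ⟨?_, ?_, hK ρ hρK π hπρ⟩
  · rintro rfl
    exact hρτ (hfree ρ hρK (hστ.trans_le hπρ))
  · rintro rfl
    exact hρτ (hfree ρ hρK (hπρ.lt_of_ne (Ne.symm hρσ)))

theorem elemCollapse_insert_pendant (hab : a ≠ b) (hb : b ∉ verts T) :
    ElemCollapse (insert {a, b} (insert {b} T)) T := by
  have hbT : ∀ ρ ∈ T, b ∉ ρ := fun ρ hρ hbρ => hb (mem_verts.2 ⟨ρ, hρ, hbρ⟩)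
  have hss : ({b} : Finset V) ⊂ {a, b} := ssubset_insert (by simpa using hab)
  refine ⟨{b}, by simp, {a, b}, by simp, hss, fun ρ hρ hbρ => ?_, ?_⟩
  · rcases mem_insert.1 hρ with rfl | hρ
    · rfl
    rcases mem_insert.1 hρ with rfl | hρ
    · exact absurd hbρ (lt_irrefl _)
    · exact absurd (hbρ.subset (mem_singleton_self b)) (hbT ρ hρ)
  · rw [erase_insert_of_ne hss.ne', erase_insert fun h => hbT _ h (mem_singleton_self b),
      erase_insert fun h => hbT _ h (mem_insert_of_mem (mem_singleton_self b))]

end Collapse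

section Connectivity

variable {K K' L : Finset (Finset V)} {a b u w : V}

theorem Joined.mono (h : K ⊆ L) (hab : Joined K a b) : Joined L a b :=
  Relation.ReflTransGen.mono (fun _ _ hcd => h hcd) a b hab

theorem Joined.symm (h : Joined K a b) : Joined K b a := by
  induction h with
  | refl => exact .refl
  | tail _ hcd ih => exact .head (by rwa [pair_comm]) ih

theorem connected_of_forall_joined (h : ∀ x ∈ verts K, Joined K u x) : Connected K :=
  fun a ha b hb => Relation.ReflTransGen.trans (h a ha).symm (h b hb)

theorem Connected.mono (h : L ⊆ K) (hv : verts K ⊆ verts L) (hL : Connected L) :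
    Connected K :=
  fun a ha b hb => (hL a (hv ha) b (hv hb)).mono h

theorem connected_point : Connected ({∅, {w}} : Finset (Finset V)) := by
  intro a ha b hb
  rw [verts_point, mem_singleton] at ha hb
  rw [ha, hb]
  exact .refl

theorem ElemCollapse.connected (hK : IsCplx K) (hdim : ∀ σ ∈ K, σ.card ≤ 2)
    (h : ElemCollapse K K') (hempty : ∅ ∈ K') (hK' : Connected K') : Connected K := by
  obtain ⟨σ, -, τ, hτ, hστ, hfree, rfl⟩ := h
  -- The empty face survives the collapse, so the free face is a vertex.
  obtain ⟨v, rfl⟩ : ∃ v, σ = {v} := by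
    have hσ : σ ≠ ∅ := by
      rintro rfl
      simp at hempty
    have := card_lt_card hστ
    have := hdim τ hτ
    have := card_pos.2 (nonempty_iff_ne_empty.2 hσ)
    exact card_eq_one.1 (by omega)
  obtain ⟨u, huτ, huv⟩ := exists_of_ssubset hστ
  rw [mem_singleton] at huv
  have hvu : ({v, u} : Finset V) ∈ K :=
    hK τ hτ _ (insert_subset (hστ.subset (mem_singleton_self v)) (singleton_subset_iff.2 huτ))
  obtain rfl : {v, u} = τ := hfree _ hvu (pair_comm u v ▸ ssubset_insert (by simpa using huv))
  have hu : {u} ∈ (K.erase {v}).erase {v, u} :=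
    mem_erase.2 ⟨(ssubset_insert (by simpa using Ne.symm huv)).ne,
      mem_erase.2 ⟨by simpa using huv, hK _ hvu {u} (by simp)⟩⟩
  refine connected_of_forall_joined (u := u) fun x hx => ?_
  obtain ⟨ρ, hρ, hxρ⟩ := mem_verts.1 hx
  by_cases hρ' : ρ ∈ (K.erase {v}).erase {v, u}
  · have hJ := hK' u (mem_verts.2 ⟨_, hu, mem_singleton_self u⟩) x
      (mem_verts.2 ⟨ρ, hρ', hxρ⟩)
    exact hJ.mono ((erase_subset _ _).trans (erase_subset _ _))
  · obtain rfl | rfl : x = v ∨ x = u := by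
      have : ρ = {v, u} ∨ ρ = {v} := by
        simp only [mem_erase] at hρ'
        tauto
      rcases this with rfl | rfl <;> simp_all
    · exact .single (by rwa [pair_comm])
    · exact .refl

theorem CollapsesTo.connected (hK : IsCplx K) (hdim : ∀ σ ∈ K, σ.card ≤ 2)
    (h : CollapsesTo K L) (hempty : ∅ ∈ L) (hL : Connected L) : Connected K := by
  induction h using Relation.ReflTransGen.head_induction_on with
  | refl => exact hL
  | head hstep hrest ih =>
    exact hstep.connected hK hdim (CollapsesTo.subset hrest hempty)
      (ih (hK.of_elemCollapse hstep) fun σ hσ => hdim σ (hstep.subset hσ))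

theorem RC.connected (hK : IsCplx K) (hpure : PureDim K 1) (h : RC K) : Connected K := by
  obtain rfl | ⟨F, hF, w, hw⟩ := h
  · exact absurd hpure.1 not_nonempty_empty
  have hKF : Connected (K \ F) :=
    hw.connected (hK.sdiff_facets hF) (fun σ hσ => hpure.card_le_two σ (mem_sdiff.1 hσ).1)
      (by simp) connected_point
  exact hKF.mono sdiff_subset (verts_sdiff_facets hK hpure le_rfl hF).ge

theorem Connected.exists_edge_leaving (hK : Connected K) {S : Finset V} (hwS : w ∈ S)
    (hw : w ∈ verts K) (hS : ¬verts K ⊆ S) :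
    ∃ a ∈ S, ∃ b ∉ S, ({a, b} : Finset V) ∈ K := by
  obtain ⟨x, hx, hxS⟩ := not_subset.1 hS
  obtain ⟨a, b, hab, ha, hb⟩ := (hK w hw x hx).exists_rel_leaving (p := (· ∈ S)) hwS hxS
  exact ⟨a, ha, b, hb, hab⟩

theorem Connected.exists_collapsible_spanning (hK : IsCplx K) (hconn : Connected K)
    (hw : w ∈ verts K) :
    ∃ T ⊆ K, IsCplx T ∧ verts T = verts K ∧ CollapsesTo T {∅, {w}} := by
  classical
  have hpoint : ({∅, {w}} : Finset (Finset V)) ⊆ K := by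
    simp [insert_subset_iff, hK.singleton_mem hw, hK.empty_mem ⟨_, hK.singleton_mem hw⟩]
  have hpoint_mem : ({∅, {w}} : Finset (Finset V)) ∈
      K.powerset.filter fun T => IsCplx T ∧ CollapsesTo T {∅, {w}} :=
    mem_filter.2 ⟨mem_powerset.2 hpoint, isCplx_point w, .refl⟩
  obtain ⟨T, hT, hmax⟩ := exists_max_image _ (fun T => (verts T).card) ⟨_, hpoint_mem⟩
  obtain ⟨hTK, hT, hTw⟩ : T ⊆ K ∧ IsCplx T ∧ CollapsesTo T {∅, {w}} := by
    simpa only [mem_filter, mem_powerset] using hT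
  -- A pendant edge leaving a maximal `T` would give a larger one.
  refine ⟨T, hTK, hT, (verts_mono hTK).antisymm (not_not.1 fun hKT => ?_), hTw⟩
  obtain ⟨a, ha, b, hb, hab⟩ := hconn.exists_edge_leaving
    (mem_verts.2 ⟨{w}, hTw.subset (by simp), mem_singleton_self w⟩) hw hKT
  have hext := hmax (insert {a, b} (insert {b} T)) <| mem_filter.2
    ⟨mem_powerset.2 (insert_subset hab (insert_subset (hK _ hab {b} (by simp)) hTK)),
      hT.insert_pendant (hT.singleton_mem ha),
      .head (elemCollapse_insert_pendant (by rintro rfl; exact hb ha) hb) hTw⟩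
  have hgrow : verts T ⊂ verts (insert {a, b} (insert {b} T)) :=
    (ssubset_iff_of_subset (verts_mono ((subset_insert _ _).trans (subset_insert _ _)))).2
      ⟨b, mem_verts.2 ⟨{b}, by simp, mem_singleton_self b⟩, hb⟩
  exact absurd hext (not_le.2 (card_lt_card hgrow))

theorem RC_of_connected (hK : IsCplx K) (hpure : PureDim K 1) (hconn : Connected K) : RC K := by
  obtain ⟨w, hw⟩ : (verts K).Nonempty := by
    obtain ⟨σ, hσ⟩ := hpure.1
    obtain ⟨τ, hτ, -, hτcard⟩ := hpure.2.2 σ hσ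
    obtain ⟨x, hx⟩ := card_pos.1 (show 0 < τ.card by omega)
    exact ⟨x, mem_verts.2 ⟨τ, hτ, hx⟩⟩
  obtain ⟨T, hTK, hT, hTv, hTw⟩ := hconn.exists_collapsible_spanning hK hw
  have hTne : T.Nonempty := ⟨_, hTw.subset (mem_insert_self _ _)⟩
  refine Or.inr ⟨K \ T, sdiff_subset_facets hpure.card_le_two hT hTne hTv.ge, w, ?_⟩
  rwa [Finset.sdiff_sdiff_eq_self hTK]

end Connectivity

/-- A nonempty pure `1`-dimensional complex satisfies the (RC)
condition iff it is connected. -/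
theorem RC_iff_connected {V : Type*} [DecidableEq V] (K : Finset (Finset V))
    (hK : IsCplx K) (hpure : PureDim K 1) :
    RC K ↔ ∀ u ∈ verts K, ∀ v ∈ verts K,
      Relation.ReflTransGen (fun a b => ({a, b} : Finset V) ∈ K) u v :=
  ⟨RC.connected hK hpure, RC_of_connected hK hpure⟩

end Paper
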